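/- Let A be a noetherian commutative ring and let f₁, …, f_n be elements of the formal power series ring A[[y₁, …, y_n]], each with zero constant term, such that the determinant of the n × n matrix whose (i,j)-entry is the coefficient of y_j in f_i is a unit of A. Then the ideal (f₁, …, f_n) equals the ideal (y₁, …, y_n); in particular the quotient ring A[[y₁, …, y_n]]/(f₁, …, f_n) is isomorphic to A. -/

import Mathlib

/-!
Basic infrastructure for jet algebras and jet modules, following the paper
"Basics of jet modules and algebraic linear differential operators".

For a ring homomorphism `k → A`, the diagonal ideal `I_{A/k} ⊆ A ⊗[k] A` is the kernel of
the multiplication map; the `N`-th jet algebra is `J^N(A/k) = (A ⊗[k] A) ⧸ I_{A/k}^{N+1}`,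
with its two `A`-algebra structure maps `p₁ : a ↦ a ⊗ 1` and `p₂ : a ↦ 1 ⊗ a`.
For an `A`-module `M`, `A ⊗[k] M` is a module over `A ⊗[k] A` via
`(a ⊗ b) • (x ⊗ m) = (a * x) ⊗ (b • m)`, and the `N`-th jet module is
`J^N(M/k) = (A ⊗[k] M) ⧸ I_{A/k}^{N+1} · (A ⊗[k] M)`, a module over `J^N(A/k)`,
equipped with the universal filtered derivation `d^N : M → J^N(M/k)`, `m ↦ [1 ⊗ m]`.
-/

open scoped TensorProduct

namespace JetPaper

section Bimodule

variable (R B C M P : Type*) [CommRing R]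
  [CommRing B] [Algebra R B] [CommRing C] [Algebra R C]
  [AddCommGroup M] [Module R M] [Module B M] [IsScalarTower R B M]
  [AddCommGroup P] [Module R P] [Module C P] [IsScalarTower R C P]

/-- The action of `C` on `M ⊗[R] P` through the right-hand factor, as an algebra
homomorphism into endomorphisms. -/
noncomputable def rightSMulEnd : C →ₐ[R] Module.End R (M ⊗[R] P) where
  toFun c := LinearMap.lTensor M (Algebra.lsmul R R P c)
  map_one' := LinearMap.ext fun x => by
    induction x using TensorProduct.induction_on with
    | zero => simp
    | tmul m p => simp
    | add u v hu hv => simp only [map_add, hu, hv]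
  map_mul' c c' := LinearMap.ext fun x => by
    induction x using TensorProduct.induction_on with
    | zero => simp
    | tmul m p => simp [mul_smul, Module.End.mul_apply]
    | add u v hu hv => simp only [map_add, Module.End.mul_apply] at hu hv ⊢; rw [hu, hv]
  map_zero' := LinearMap.ext fun x => by
    induction x using TensorProduct.induction_on with
    | zero => simp
    | tmul m p => simp
    | add u v hu hv => simp only [map_add, hu, hv]
  map_add' c c' := LinearMap.ext fun x => by
    induction x using TensorProduct.induction_on with
    | zero => simp
    | tmul m p => simp [add_smul, TensorProduct.tmul_add]
    | add u v hu hv =>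
        simp only [map_add, LinearMap.add_apply] at hu hv ⊢
        rw [hu, hv]
  commutes' r := LinearMap.ext fun x => by
    induction x using TensorProduct.induction_on with
    | zero => simp
    | tmul m p =>
        simp only [LinearMap.lTensor_tmul, Algebra.lsmul_coe,
          Module.algebraMap_end_apply, algebraMap_smul]
        rw [TensorProduct.tmul_smul]
    | add u v hu hv => simp only [map_add, hu, hv]

@[simp] lemma rightSMulEnd_tmul (c : C) (m : M) (p : P) :
    rightSMulEnd R C M P c (m ⊗ₜ[R] p) = m ⊗ₜ[R] (c • p) := by
  simp [rightSMulEnd]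

/-- The algebra homomorphism `B ⊗[R] C → End (M ⊗[R] P)` realizing the natural
bimodule structure `(b ⊗ c) • (m ⊗ p) = (b • m) ⊗ (c • p)`. -/
noncomputable def bimodMap : (B ⊗[R] C) →ₐ[R] Module.End R (M ⊗[R] P) :=
  Algebra.TensorProduct.lift (Algebra.lsmul R R (M ⊗[R] P)) (rightSMulEnd R C M P)
    (fun b c => LinearMap.ext fun x => by
      induction x using TensorProduct.induction_on with
      | zero => simp [Module.End.mul_apply]
      | tmul m p => simp [Module.End.mul_apply, TensorProduct.smul_tmul']
      | add u v hu hv =>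
          simp only [Module.End.mul_apply] at hu hv ⊢
          simp only [map_add, hu, hv])

/-- The `B ⊗[R] C`-module structure on `M ⊗[R] P`, where `B` acts through the left factor
and `C` through the right one. -/
noncomputable def bimodule : Module (B ⊗[R] C) (M ⊗[R] P) :=
  Module.compHom _ (bimodMap R B C M P).toRingHom

/-- The action of `C` on `M ⊗[R] P` through the right-hand factor, as a module structure. -/
noncomputable def rightTensorModule : Module C (M ⊗[R] P) :=
  Module.compHom _ (rightSMulEnd R C M P).toRingHom

end Bimodule

section BiTensorDef

/-- Type synonym for `M ⊗[R] P`, regarded as a module over `B ⊗[R] C`, where `B` acts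
through the left factor and `C` through the right factor. -/
@[nolint unusedArguments]
def BiTensor (R B C M P : Type*) [CommRing R]
    [CommRing B] [Algebra R B] [CommRing C] [Algebra R C]
    [AddCommGroup M] [Module R M] [Module B M] [IsScalarTower R B M]
    [AddCommGroup P] [Module R P] [Module C P] [IsScalarTower R C P] : Type _ :=
  M ⊗[R] P

variable (R B C M P : Type*) [CommRing R]
  [CommRing B] [Algebra R B] [CommRing C] [Algebra R C]
  [AddCommGroup M] [Module R M] [Module B M] [IsScalarTower R B M]
  [AddCommGroup P] [Module R P] [Module C P] [IsScalarTower R C P]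

/-- The canonical (identity) map `M ⊗[R] P → BiTensor R B C M P`. -/
def BiTensor.of : M ⊗[R] P → BiTensor R B C M P := id

noncomputable instance : AddCommGroup (BiTensor R B C M P) :=
  inferInstanceAs (AddCommGroup (M ⊗[R] P))

noncomputable instance : Module R (BiTensor R B C M P) :=
  inferInstanceAs (Module R (M ⊗[R] P))

noncomputable instance : Module (B ⊗[R] C) (BiTensor R B C M P) := bimodule R B C M P

noncomputable instance : Module C (BiTensor R B C M P) := rightTensorModule R C M P

lemma BiTensor.smul_of (b : B) (c : C) (m : M) (p : P) :
    (b ⊗ₜ[R] c : B ⊗[R] C) • BiTensor.of R B C M P (m ⊗ₜ[R] p) =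
      BiTensor.of R B C M P ((b • m) ⊗ₜ[R] (c • p)) := by
  show bimodMap R B C M P (b ⊗ₜ[R] c) (m ⊗ₜ[R] p) = _
  rw [show bimodMap R B C M P (b ⊗ₜ[R] c) = Algebra.lsmul R R (M ⊗[R] P) b *
    rightSMulEnd R C M P c from Algebra.TensorProduct.lift_tmul _ _ _ _ _]
  simp only [Module.End.mul_apply, TensorProduct.smul_tmul', rightSMulEnd_tmul,
    Algebra.lsmul_coe]
  rfl

lemma BiTensor.rsmul_of (c : C) (m : M) (p : P) :
    c • BiTensor.of R B C M P (m ⊗ₜ[R] p) = BiTensor.of R B C M P (m ⊗ₜ[R] (c • p)) := by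
  show rightSMulEnd R C M P c (m ⊗ₜ[R] p) = _
  simp only [rightSMulEnd_tmul]
  rfl

attribute [local instance] Algebra.TensorProduct.rightAlgebra in
instance : IsScalarTower C (B ⊗[R] C) (BiTensor R B C M P) := by
  refine IsScalarTower.of_algebraMap_smul
    (R := C) (A := B ⊗[R] C) (M := BiTensor R B C M P) fun c x => ?_
  have halg : algebraMap C (B ⊗[R] C) c = (1 : B) ⊗ₜ[R] c := rfl
  have key : ∀ y : M ⊗[R] P,
      ((1 : B) ⊗ₜ[R] c : B ⊗[R] C) • BiTensor.of R B C M P y =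
        c • BiTensor.of R B C M P y := by
    intro y
    induction y using TensorProduct.induction_on with
    | zero =>
        show ((1 : B) ⊗ₜ[R] c : B ⊗[R] C) • (0 : BiTensor R B C M P) =
          c • (0 : BiTensor R B C M P)
        rw [smul_zero, smul_zero]
    | tmul m p => rw [BiTensor.smul_of, one_smul, BiTensor.rsmul_of]
    | add u v hu hv =>
        have hadd : ∀ u v : M ⊗[R] P, BiTensor.of R B C M P (u + v) =
            BiTensor.of R B C M P u + BiTensor.of R B C M P v := fun _ _ => rfl
        rw [hadd, smul_add, smul_add, hu, hv]
  rw [halg]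
  exact key x

end BiTensorDef

section JetDef

variable (k A : Type*) [CommRing k] [CommRing A] [Algebra k A]

/-- The diagonal ideal `I_{A/k} ⊆ A ⊗[k] A`: the kernel of the multiplication map. -/
noncomputable abbrev diagIdeal : Ideal (A ⊗[k] A) := KaehlerDifferential.ideal k A

/-- The `N`-th jet algebra `J^N(A/k) = (A ⊗[k] A) ⧸ I_{A/k}^{N+1}`. -/
noncomputable abbrev JetAlg (N : ℕ) : Type _ :=
  (A ⊗[k] A) ⧸ (diagIdeal k A ^ (N + 1))

/-- The first `A`-algebra structure map `p₁ : A → J^N(A/k)`, `a ↦ a ⊗ 1`. -/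
noncomputable def jetP1 (N : ℕ) : A →+* JetAlg k A N :=
  (Ideal.Quotient.mk _).comp Algebra.TensorProduct.includeLeftRingHom

/-- The second `A`-algebra structure map `p₂ : A → J^N(A/k)`, `a ↦ 1 ⊗ a`. -/
noncomputable def jetP2 (N : ℕ) : A →+* JetAlg k A N :=
  (Ideal.Quotient.mk _).comp (Algebra.TensorProduct.includeRight : A →ₐ[k] A ⊗[k] A).toRingHom

variable (M : Type*) [AddCommGroup M] [Module k M] [Module A M] [IsScalarTower k A M]

/-- `A ⊗[k] M` is a module over `A ⊗[k] A` via `(a ⊗ b) • (x ⊗ m) = (a * x) ⊗ (b • m)`. -/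
noncomputable instance jetTensorModule : Module (A ⊗[k] A) (A ⊗[k] M) :=
  bimodule k A A A M

@[simp] lemma jet_smul_tmul (a b x : A) (m : M) :
    (a ⊗ₜ[k] b : A ⊗[k] A) • (x ⊗ₜ[k] m : A ⊗[k] M) = (a * x) ⊗ₜ[k] (b • m) := by
  show bimodMap k A A A M (a ⊗ₜ[k] b) (x ⊗ₜ[k] m) = _
  rw [show bimodMap k A A A M (a ⊗ₜ[k] b) = Algebra.lsmul k k (A ⊗[k] M) a *
    rightSMulEnd k A A M b from Algebra.TensorProduct.lift_tmul _ _ _ _ _]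
  simp [Module.End.mul_apply, TensorProduct.smul_tmul', smul_eq_mul]

instance jetTower1 : IsScalarTower A (A ⊗[k] A) (A ⊗[k] M) :=
  IsScalarTower.of_algebraMap_smul fun a x => by
    have halg : algebraMap A (A ⊗[k] A) a = a ⊗ₜ[k] (1 : A) := rfl
    rw [halg]
    induction x using TensorProduct.induction_on with
    | zero => simp
    | tmul y m => rw [jet_smul_tmul, TensorProduct.smul_tmul']; simp
    | add u v hu hv => rw [smul_add, hu, hv, smul_add]

instance jetTower0 : IsScalarTower k (A ⊗[k] A) (A ⊗[k] M) :=
  IsScalarTower.of_algebraMap_smul fun r x => by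
    rw [IsScalarTower.algebraMap_apply k A (A ⊗[k] A), algebraMap_smul, algebraMap_smul]

/-- The `N`-th jet module `J^N(M/k) = (A ⊗[k] M) ⧸ I_{A/k}^{N+1}·(A ⊗[k] M)`;
it is a module over `J^N(A/k)`. -/
noncomputable abbrev JetMod (N : ℕ) : Type _ :=
  (A ⊗[k] M) ⧸ ((diagIdeal k A ^ (N + 1)) • (⊤ : Submodule (A ⊗[k] A) (A ⊗[k] M)))

/-- The universal (filtered) derivation `d^N_{M/k} : M → J^N(M/k)`, `m ↦ [1 ⊗ m]`. -/
noncomputable def jetD (N : ℕ) : M → JetMod k A M N :=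
  fun m => Submodule.Quotient.mk ((1 : A) ⊗ₜ[k] m)

instance jetModTower (N : ℕ) : IsScalarTower k A (JetMod k A M N) :=
  IsScalarTower.of_algebraMap_smul fun r x => by
    obtain ⟨y, rfl⟩ := Submodule.Quotient.mk_surjective _ x
    rw [← Submodule.Quotient.mk_smul, ← Submodule.Quotient.mk_smul, algebraMap_smul]

instance jetQuotTower (N : ℕ) : IsScalarTower A (JetAlg k A N) (JetMod k A M N) := by
  refine IsScalarTower.of_algebraMap_smul
    (R := A) (A := JetAlg k A N) (M := JetMod k A M N) fun a x => ?_
  obtain ⟨y, rfl⟩ := Submodule.Quotient.mk_surjective _ x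
  have h1 : algebraMap A (JetAlg k A N) a • (Submodule.Quotient.mk y : JetMod k A M N) =
      Submodule.Quotient.mk ((algebraMap A (A ⊗[k] A) a) • y) := rfl
  rw [h1, algebraMap_smul (A ⊗[k] A) a y, Submodule.Quotient.mk_smul]

end JetDef

end JetPaper

/-!
Let `𝔪 = (y₁, …, y_n)`, the kernel of the constant coefficient. Inverting the matrix of
linear coefficients writes each `y_l` as an `A`-linear combination of the `f_i` modulo `𝔪²`,
so `𝔪 ≤ (f) + 𝔪 • 𝔪`. As `𝔪` is finitely generated and lies in the Jacobson radical
(every series with unit constant term is invertible), Nakayama's lemma gives `𝔪 ≤ (f)`.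
-/

namespace MvPowerSeries

variable {σ R : Type*} [CommRing R]

theorem exists_eq_sum_X_mul [Fintype σ] {g : MvPowerSeries σ R} (hg : constantCoeff g = 0) :
    ∃ h : σ → MvPowerSeries σ R, g = ∑ j, X j * h j ∧
      ∀ j, constantCoeff (h j) = coeff (Finsupp.single j 1) g := by
  classical
  let _ : LinearOrder σ := LinearOrder.lift' _ (Fintype.equivFin σ).injective
  -- Split `g` according to the least variable occurring in each monomial.
  let S : σ → Set (σ →₀ ℕ) := fun j => {d | d j ≠ 0 ∧ ∀ i < j, d i = 0}
  have hdisj : ((Finset.univ : Finset σ) : Set σ).PairwiseDisjoint S := by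
    intro j _ k _ hjk
    refine Set.disjoint_left.mpr fun d hj hk => ?_
    rcases hjk.lt_or_gt with h | h
    · exact hj.1 (hk.2 j h)
    · exact hk.1 (hj.2 k h)
  have hcover : ⋃ j ∈ Finset.univ, S j = {0}ᶜ := by
    ext d
    simp only [Finset.mem_univ, Set.iUnion_true, Set.mem_iUnion, Set.mem_compl_singleton_iff]
    refine ⟨fun ⟨j, hj⟩ hd => hj.1 (by simp [hd]), fun hd => ?_⟩
    have hne : d.support.Nonempty := Finsupp.support_nonempty_iff.mpr hd
    refine ⟨d.support.min' hne, Finsupp.mem_support_iff.mp (d.support.min'_mem hne),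
      fun i hi => ?_⟩
    by_contra hi'
    exact (d.support.min'_le i (Finsupp.mem_support_iff.mpr hi')).not_gt hi
  let P : σ → MvPowerSeries σ R := fun j => (S j).indicator fun d => coeff d g
  have coeff_P : ∀ j d, coeff d (P j) = (S j).indicator (fun d => coeff d g) d := fun _ _ => rfl
  have hdvd : ∀ j, X j ∣ P j := fun j =>
    X_dvd_iff.mpr fun m hm => by rw [coeff_P, Set.indicator_of_notMem (fun h => h.1 hm)]
  choose h hh using hdvd
  refine ⟨h, ?_, fun j => ?_⟩
  · ext d
    simp only [← hh, map_sum, coeff_P]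
    rw [← Finset.indicator_biUnion_apply _ _ hdisj, hcover]
    by_cases hd : d = 0
    · subst hd; simpa using hg
    · exact (Set.indicator_of_mem (Set.mem_compl_singleton_iff.mpr hd) _).symm
  · calc constantCoeff (h j) = coeff (Finsupp.single j 1) (X j * h j) := by
          simpa [X_def] using (coeff_add_monomial_mul (Finsupp.single j 1) 0 (h j) 1).symm
      _ = coeff (Finsupp.single j 1) g := by
          rw [← hh j, coeff_P]
          exact Set.indicator_of_mem (s := S j)
            ⟨by simp, fun i hi => Finsupp.single_eq_of_ne hi.ne⟩ _

theorem ker_constantCoeff [Fintype σ] :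
    RingHom.ker (constantCoeff : MvPowerSeries σ R →+* R) = Ideal.span (Set.range X) := by
  refine le_antisymm (fun g hg => ?_) (Ideal.span_le.mpr ?_)
  · obtain ⟨h, rfl, -⟩ := exists_eq_sum_X_mul (RingHom.mem_ker.mp hg)
    exact Ideal.sum_mem _ fun j _ => Ideal.mul_mem_right _ _ (Ideal.subset_span ⟨j, rfl⟩)
  · rintro _ ⟨j, rfl⟩
    exact constantCoeff_X j

theorem ker_constantCoeff_le_jacobson_bot :
    RingHom.ker (constantCoeff : MvPowerSeries σ R →+* R) ≤ Ideal.jacobson ⊥ := fun g hg =>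
  Ideal.mem_jacobson_bot.mpr fun y =>
    isUnit_iff_constantCoeff.mpr (by simp [RingHom.mem_ker.mp hg])

theorem mem_span_X_sq_of_coeff_eq_zero [Fintype σ] {g : MvPowerSeries σ R}
    (h0 : constantCoeff g = 0) (h1 : ∀ j, coeff (Finsupp.single j 1) g = 0) :
    g ∈ Ideal.span (Set.range X) ^ 2 := by
  obtain ⟨h, rfl, hh⟩ := exists_eq_sum_X_mul h0
  rw [pow_two]
  refine Ideal.sum_mem _ fun j _ => Ideal.mul_mem_mul (Ideal.subset_span ⟨j, rfl⟩) ?_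
  rw [← ker_constantCoeff]
  exact (hh j).trans (h1 j)

theorem span_range_eq_span_X_of_isUnit_det [Fintype σ] [DecidableEq σ]
    (f : σ → MvPowerSeries σ R) (h0 : ∀ i, constantCoeff (f i) = 0)
    (hdet : IsUnit (Matrix.of fun i j => coeff (Finsupp.single j 1) (f i)).det) :
    Ideal.span (Set.range f) = Ideal.span (Set.range X) := by
  set J := Matrix.of fun i j => coeff (Finsupp.single j 1) (f i)
  have hle : Ideal.span (Set.range f) ≤ Ideal.span (Set.range X) := by
    rw [Ideal.span_le, ← ker_constantCoeff]
    rintro _ ⟨i, rfl⟩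
    exact h0 i
  have hjac : Ideal.span (Set.range X) ≤ Ideal.jacobson (⊥ : Ideal (MvPowerSeries σ R)) :=
    ker_constantCoeff (σ := σ) (R := R) ▸ ker_constantCoeff_le_jacobson_bot
  refine hle.antisymm (Submodule.le_of_le_smul_of_le_jacobson_bot
    (Submodule.fg_span (Set.finite_range X)) hjac ?_)
  rw [Ideal.span_le]
  rintro _ ⟨l, rfl⟩
  set r := X l - ∑ i, C (J⁻¹ l i) * f i
  have hr : r ∈ Ideal.span (Set.range X) ^ 2 := by
    refine mem_span_X_sq_of_coeff_eq_zero (by simp [r, h0]) fun j => ?_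
    have hKJ := congr_fun (congr_fun (Matrix.nonsing_inv_mul J hdet) l) j
    rw [Matrix.mul_apply, Matrix.one_apply] at hKJ
    simp only [r, map_sub, map_sum, coeff_C_mul, coeff_index_single_X]
    simp only [J, Matrix.of_apply] at hKJ
    rw [hKJ, sub_eq_zero]
    exact if_congr eq_comm rfl rfl
  rw [smul_eq_mul, ← pow_two]
  exact Submodule.mem_sup.mpr ⟨_, Ideal.sum_mem _ fun i _ =>
    Ideal.mul_mem_left _ _ (Ideal.subset_span ⟨i, rfl⟩), r, hr, add_sub_cancel _ _⟩

end MvPowerSeries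

namespace JetPaper

theorem formal_inverse_function_general
    (A : Type*) [CommRing A] (n : ℕ)
    (f : Fin n → MvPowerSeries (Fin n) A)
    (h0 : ∀ i, MvPowerSeries.constantCoeff (σ := Fin n) (R := A) (f i) = 0)
    (hdet : IsUnit (Matrix.det (Matrix.of fun i j : Fin n =>
      MvPowerSeries.coeff (R := A) (Finsupp.single j 1) (f i)))) :
    Ideal.span (Set.range f) =
      Ideal.span (Set.range (MvPowerSeries.X : Fin n → MvPowerSeries (Fin n) A)) ∧
    Nonempty ((MvPowerSeries (Fin n) A ⧸ Ideal.span (Set.range f)) ≃+* A) := by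
  have hspan := MvPowerSeries.span_range_eq_span_X_of_isUnit_det f h0 hdet
  have hker := hspan.trans MvPowerSeries.ker_constantCoeff.symm
  have hsurj : Function.Surjective (MvPowerSeries.constantCoeff (σ := Fin n) (R := A)) :=
    fun a => ⟨MvPowerSeries.C a, MvPowerSeries.constantCoeff_C a⟩
  exact ⟨hspan,
    ⟨(Ideal.quotEquivOfEq hker).trans (RingHom.quotientKerEquivOfSurjective hsurj)⟩⟩

/-- (Formal inverse function theorem) Let `A` be a noetherian ring and
`f₁, …, f_n ∈ A[[y₁, …, y_n]]` power series with zero constant term such that the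
determinant of the matrix of linear coefficients `(coeff of y_j in f_i)` is a unit of `A`.
Then `(f₁, …, f_n) = (y₁, …, y_n)`; in particular
`A[[y₁, …, y_n]]/(f₁, …, f_n) ≅ A`. -/
theorem formal_inverse_function
    (A : Type*) [CommRing A] [IsNoetherianRing A] (n : ℕ)
    (f : Fin n → MvPowerSeries (Fin n) A)
    (h0 : ∀ i, MvPowerSeries.constantCoeff (σ := Fin n) (R := A) (f i) = 0)
    (hdet : IsUnit (Matrix.det (Matrix.of fun i j : Fin n =>
      MvPowerSeries.coeff (R := A) (Finsupp.single j 1) (f i)))) :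
    Ideal.span (Set.range f) =
      Ideal.span (Set.range (MvPowerSeries.X : Fin n → MvPowerSeries (Fin n) A)) ∧
    Nonempty ((MvPowerSeries (Fin n) A ⧸ Ideal.span (Set.range f)) ≃+* A) :=
  formal_inverse_function_general A n f h0 hdet

end JetPaper
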